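/- arXiv:2407.16481 — 3 statements merged into one kernel-verified Lean document; each statement's English description precedes it below -/
import Mathlib

section
/- Let d > n > 0 be integers and let (α_1,…,α_n; β_1,…,β_n) be a tuple of elements of ℤ/dℤ with Σα_i − Σβ_i = d(d−1)/2, with α_i ≠ β_j for all i,j, and with the β_i pairwise distinct. Define complex numbers A_0,…,A_n and B_0,…,B_n by ∏_{j=1}^n (X − e^{2πiα_j/d}) = Σ_j A_j X^j and ∏_{j=1}^n (X − e^{2πiβ_j/d}) = Σ_j B_j X^j, and let A, B be the corresponding companion matrices. Then the matrix u = A^{-1}B satisfies: u − id has rank one, det u = 1 if d is odd, and det u = −1 if d is even. -/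
/-!
The companion matrices `A` and `B` differ only in their last column, so `B - A` is the rank-one
matrix `w ⊗ eₙ` with `w` the coefficients of `p_α - p_β`; it is nonzero because `ζ(β₁)` is a root
of `p_β` but not of `p_α`. Hence `u - 1 = A⁻¹ (B - A)` has rank one. The determinant of the
companion matrix of `∏ (X - r_j)` is `∏ r_j`, and `ζ` is the standard additive character of
`ZMod d`, so `det u = ζ(∑ β - ∑ α) = ζ(-d(d-1)/2) = e^{-πi(d-1)} = (-1)^(d-1)`.
-/

open Polynomial

/-- The companion matrix of a monic polynomial of degree `n`:
subdiagonal `1`'s, last column the negatives of the coefficients. -/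
noncomputable def companionMatrix (n : ℕ) (p : Polynomial ℂ) : Matrix (Fin n) (Fin n) ℂ :=
  Matrix.of fun i j =>
    if (j : ℕ) = n - 1 then -(p.coeff i) else if (i : ℕ) = (j : ℕ) + 1 then 1 else 0

open Matrix

lemma AddChar.map_sum_eq_prod {ι A M : Type*} [AddCommMonoid A] [CommMonoid M] (ψ : AddChar A M)
    (s : Finset ι) (f : ι → A) : ψ (∑ i ∈ s, f i) = ∏ i ∈ s, ψ (f i) :=
  map_prod ψ.toMonoidHom (fun i => Multiplicative.ofAdd (f i)) s

lemma Polynomial.isMonicOfDegree_prod_X_sub_C {R : Type*} [CommRing R] [Nontrivial R] {n : ℕ}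
    (r : Fin n → R) : IsMonicOfDegree (∏ j, (X - C (r j))) n :=
  ⟨by simp, monic_prod_X_sub_C r _⟩

lemma Polynomial.prod_X_sub_C_ne_prod_X_sub_C {R ι : Type*} [CommRing R] [IsDomain R] [Fintype ι]
    {r s : ι → R} (i : ι) (h : ∀ j, r j ≠ s i) :
    ∏ j, (X - C (r j)) ≠ ∏ j, (X - C (s j)) := by
  intro hrs
  have hroot : (∏ j, (X - C (s j))).eval (s i) = 0 := by
    simpa [eval_prod, Finset.prod_eq_zero_iff] using ⟨i, sub_self _⟩
  rw [← hrs, eval_prod, Finset.prod_eq_zero_iff] at hroot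
  obtain ⟨j, -, hj⟩ := hroot
  exact h j (by simpa [sub_eq_zero, eq_comm] using hj)

lemma Matrix.rank_vecMulVec_eq_one {K m n : Type*} [Field K] [Fintype m] [Fintype n]
    [DecidableEq n] {w : m → K} {v : n → K} (hw : w ≠ 0) (hv : v ≠ 0) :
    (vecMulVec w v).rank = 1 := by
  refine le_antisymm (rank_vecMulVec_le w v) ?_
  obtain ⟨j, hj⟩ : ∃ j, v j ≠ 0 := Function.ne_iff.mp hv
  have hw_mem : w ∈ LinearMap.range (vecMulVec w v).mulVecLin :=
    ⟨Pi.single j (v j)⁻¹, by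
      ext i; simp [mulVec_single, vecMulVec_apply, mul_inv_cancel_right₀ hj]⟩
  exact Submodule.one_le_finrank_iff.mpr fun h => hw (by simpa [h] using hw_mem)

lemma Matrix.rank_nonsing_inv_mul_sub_one {K n : Type*} [Field K] [Fintype n] [DecidableEq n]
    {A : Matrix n n K} (hA : IsUnit A.det) (B : Matrix n n K) :
    (A⁻¹ * B - 1).rank = (B - A).rank := by
  rw [← nonsing_inv_mul A hA, ← Matrix.mul_sub]
  exact rank_mul_eq_right_of_isUnit_det _ _ (isUnit_nonsing_inv_det A hA)

lemma companionMatrix_sub_companionMatrix (n : ℕ) (p q : ℂ[X]) :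
    companionMatrix n p - companionMatrix n q =
      vecMulVec (fun i : Fin n => (q - p).coeff i)
        (fun j : Fin n => if (j : ℕ) = n - 1 then 1 else 0) := by
  ext i j
  by_cases hj : (j : ℕ) = n - 1 <;> simp [companionMatrix, vecMulVec_apply, hj, neg_add_eq_sub]

lemma rank_companionMatrix_sub_companionMatrix {n : ℕ} {p q : ℂ[X]} (hp : IsMonicOfDegree p n)
    (hq : IsMonicOfDegree q n) (hpq : p ≠ q) :
    (companionMatrix n p - companionMatrix n q).rank = 1 := by
  have hn : n ≠ 0 := by
    rintro rfl
    exact hpq ((isMonicOfDegree_zero_iff.mp hp).trans (isMonicOfDegree_zero_iff.mp hq).symm)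
  have hdeg : (q - p).natDegree < n := hq.natDegree_sub_lt hn hp
  rw [companionMatrix_sub_companionMatrix]
  refine rank_vecMulVec_eq_one (Function.ne_iff.mpr ⟨⟨_, hdeg⟩, ?_⟩)
    (Function.ne_iff.mpr ⟨⟨n - 1, by omega⟩, by simp⟩)
  simpa using sub_ne_zero.mpr hpq.symm

lemma det_companionMatrix_succ (n : ℕ) (p : ℂ[X]) :
    (companionMatrix (n + 1) p).det = (-1) ^ (n + 1) * p.coeff 0 := by
  rw [det_succ_row_zero, Finset.sum_eq_single (Fin.last n)]
  · have hminor : (companionMatrix (n + 1) p).submatrix Fin.succ (Fin.last n).succAbove = 1 := by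
      ext i j
      have hj : (j : ℕ) ≠ n := j.isLt.ne
      by_cases h : i = j <;> simp [companionMatrix, one_apply, hj, h, Fin.val_inj]
    rw [hminor, det_one]
    simp only [Fin.val_last, companionMatrix, add_tsub_cancel_right, of_apply, ↓reduceIte,
      Fin.coe_ofNat_eq_mod, Nat.zero_mod, mul_neg, mul_one]
    ring
  · intro j _ hj
    have hj' : (j : ℕ) ≠ n := fun h => hj (Fin.ext h)
    simp [companionMatrix, hj']
  · simp

lemma det_companionMatrix_prod_X_sub_C {n : ℕ} (r : Fin n → ℂ) :
    (companionMatrix n (∏ j, (X - C (r j)))).det = ∏ j, r j := by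
  cases n with
  | zero => simp
  | succ n =>
    rw [det_companionMatrix_succ, coeff_zero_prod]
    simp [Finset.prod_neg, ← mul_assoc, ← pow_add]

lemma ZMod.stdAddChar_apply_eq_exp {d : ℕ} [NeZero d] (x : ZMod d) :
    ZMod.stdAddChar x = Complex.exp (2 * Real.pi * Complex.I * x.val / d) := by
  rw [stdAddChar_apply, toCircle_apply]

lemma ZMod.stdAddChar_natCast_choose_two (d : ℕ) [NeZero d] :
    ZMod.stdAddChar ((d.choose 2 : ℕ) : ZMod d) = (-1) ^ (d - 1) := by
  have hd : (d : ℂ) ≠ 0 := NeZero.ne _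
  have hchoose : ((d.choose 2 : ℕ) : ℂ) = d * (d - 1 : ℕ) / 2 := by
    rw [Nat.choose_two_right, Nat.cast_div_charZero (Nat.even_mul_pred_self d).two_dvd]
    push_cast; ring
  rw [← Int.cast_natCast, stdAddChar_coe, ← Complex.exp_pi_mul_I, ← Complex.exp_nat_mul]
  push_cast [hchoose]
  congr 1
  field_simp

theorem hypergeometric_pseudoreflection_general
    (d n : ℕ) (hn : 0 < n) (hnd : n < d)
    (α β : Fin n → ZMod d)
    (hsum : (∑ i, α i) - (∑ i, β i) = (d.choose 2 : ZMod d))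
    (hαβ : ∀ i j, α i ≠ β j) :
    let ζ : ZMod d → ℂ := fun x => Complex.exp (2 * Real.pi * Complex.I * x.val / d)
    let A := companionMatrix n (∏ j, (X - C (ζ (α j))))
    let B := companionMatrix n (∏ j, (X - C (ζ (β j))))
    let u := A⁻¹ * B
    (u - 1).rank = 1 ∧ (Odd d → u.det = 1) ∧ (Even d → u.det = -1) := by
  have : NeZero d := ⟨by omega⟩
  intro ζ A B u
  have hζ : ζ = ZMod.stdAddChar := funext fun x => (ZMod.stdAddChar_apply_eq_exp x).symm
  have hζ_ne_zero (x : ZMod d) : ζ x ≠ 0 := Complex.exp_ne_zero _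
  have hdetA : A.det = ζ (∑ i, α i) := by
    rw [det_companionMatrix_prod_X_sub_C, hζ, AddChar.map_sum_eq_prod]
  have hdetB : B.det = ζ (∑ i, β i) := by
    rw [det_companionMatrix_prod_X_sub_C, hζ, AddChar.map_sum_eq_prod]
  have hA : IsUnit A.det := hdetA ▸ (hζ_ne_zero _).isUnit
  have hdet : u.det = (-1) ^ (d - 1) := by
    rw [det_mul, det_nonsing_inv, Ring.inverse_eq_inv, hdetA, hdetB, eq_add_of_sub_eq hsum, hζ,
      AddChar.map_add_eq_mul, ZMod.stdAddChar_natCast_choose_two, mul_inv, mul_assoc,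
      inv_mul_cancel₀ (hζ ▸ hζ_ne_zero _), mul_one, ← inv_pow, inv_neg_one]
  refine ⟨?_, fun ⟨k, hk⟩ => ?_, fun ⟨k, hk⟩ => ?_⟩
  · rw [rank_nonsing_inv_mul_sub_one hA]
    have hζ_inj : Function.Injective ζ := hζ ▸ ZMod.injective_stdAddChar
    exact rank_companionMatrix_sub_companionMatrix (isMonicOfDegree_prod_X_sub_C _)
      (isMonicOfDegree_prod_X_sub_C _)
      (prod_X_sub_C_ne_prod_X_sub_C (r := fun j => ζ (α j)) (s := fun j => ζ (β j)) ⟨0, hn⟩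
        fun j => hζ_inj.ne (hαβ j _)).symm
  · rw [hdet, Even.neg_one_pow ⟨k, by omega⟩]
  · rw [hdet, Odd.neg_one_pow ⟨k - 1, by omega⟩]

/-- The hypergeometric monodromy element `u = A⁻¹ B` attached to a hypergeometric
parameter is a pseudoreflection, with `det u = 1` for odd `d` and `det u = -1`
for even `d`. -/
theorem hypergeometric_pseudoreflection
    (d n : ℕ) (hn : 0 < n) (hnd : n < d)
    (α β : Fin n → ZMod d)
    (hsum : (∑ i, α i) - (∑ i, β i) = (d.choose 2 : ZMod d))
    (hαβ : ∀ i j, α i ≠ β j)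
    (hβ : Function.Injective β) :
    let ζ : ZMod d → ℂ := fun x => Complex.exp (2 * Real.pi * Complex.I * x.val / d)
    let A := companionMatrix n (∏ j, (X - C (ζ (α j))))
    let B := companionMatrix n (∏ j, (X - C (ζ (β j))))
    let u := A⁻¹ * B
    (u - 1).rank = 1 ∧ (Odd d → u.det = 1) ∧ (Even d → u.det = -1) :=
  hypergeometric_pseudoreflection_general d n hn hnd α β hsum hαβ
end

section
/- Let d ≥ 1 and define, for a ∈ (ℤ/dℤ)∖{0}, the function ⟨δ_a⟩ : (ℤ/dℤ)^× → ℚ by ⟨δ_a⟩(s) = [sa]/d. For a divisor m of d with ma ≠ 0, set ε_{m,a} = δ_{−ma} + Σ_{j=0}^{m-1} δ_{a + jd/m}. Then ⟨ε_{m,a}⟩(s) = (1/d)([−sma] + Σ_{j=0}^{m-1}[sa + sjd/m]) is independent of s ∈ (ℤ/dℤ)^×, and equals (m+1)/2 when (computed for) any s. -/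
/-- `(n*X + r) % (m*n) = n*(X % m) + r` when `r < n`. -/
lemma aux_mod (m n X r : ℕ) (hr : r < n) :
    (n * X + r) % (m * n) = n * (X % m) + r := by
  rcases Nat.eq_zero_or_pos m with hm | hm
  · subst hm; simp [Nat.mod_zero]
  · have h := Nat.div_add_mod X m
    have key : n * X + r = (n * (X % m) + r) + (m * n) * (X / m) := by
      conv_lhs => rw [← h]
      ring
    rw [key, Nat.add_mul_mod_self_left]
    exact Nat.mod_eq_of_lt (by
      have h1 : X % m < m := Nat.mod_lt _ hm
      calc n * (X % m) + r < n * (X % m) + n := by omega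
        _ = n * (X % m + 1) := by ring
        _ ≤ n * m := Nat.mul_le_mul_left _ (by omega)
        _ = m * n := Nat.mul_comm _ _)

/-- Sum of `(q + c*j) % m` over `j < m` equals sum of `j < m`, for `c` coprime to `m`. -/
lemma aux_sum (m q c : ℕ) (hc : Nat.Coprime c m) :
    ∑ j ∈ Finset.range m, (q + c * j) % m = ∑ j ∈ Finset.range m, j := by
  rcases Nat.eq_zero_or_pos m with hm | hm
  · subst hm; simp
  have hinj : ∀ j1 ∈ Finset.range m, ∀ j2 ∈ Finset.range m,
      (q + c * j1) % m = (q + c * j2) % m → j1 = j2 := by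
    intro j1 hj1 j2 hj2 h
    simp only [Finset.mem_range] at hj1 hj2
    have h' : q + c * j1 ≡ q + c * j2 [MOD m] := h
    have h2 : c * j1 ≡ c * j2 [MOD m] := Nat.ModEq.add_left_cancel' q h'
    have h3 : j1 ≡ j2 [MOD m] := Nat.ModEq.cancel_left_of_coprime hc.symm h2
    have h4 : j1 % m = j2 % m := h3
    rwa [Nat.mod_eq_of_lt hj1, Nat.mod_eq_of_lt hj2] at h4
  have himg : (Finset.range m).image (fun j => (q + c * j) % m) = Finset.range m := by
    apply Finset.eq_of_subset_of_card_le
    · intro k hk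
      simp only [Finset.mem_image] at hk
      obtain ⟨j, _, rfl⟩ := hk
      exact Finset.mem_range.mpr (Nat.mod_lt _ hm)
    · rw [Finset.card_image_of_injOn
        (fun x hx y hy h => hinj x (Finset.mem_coe.mp hx) y (Finset.mem_coe.mp hy) h)]
  calc ∑ j ∈ Finset.range m, (q + c * j) % m
      = ∑ k ∈ (Finset.range m).image (fun j => (q + c * j) % m), k :=
        (Finset.sum_image (f := fun k => k) (g := fun j => (q + c * j) % m) hinj).symm
    _ = ∑ j ∈ Finset.range m, j := by rw [himg]

/-- `⟨ε_{m,a}⟩(s)` is independent of `s ∈ (ℤ/dℤ)ˣ` and equals `(m+1)/2`. -/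
theorem epsilon_bracket_const
    (d m : ℕ) [NeZero d] (hm : m ∣ d) (a : ZMod d)
    (ha : a ≠ 0) (hma : (m : ZMod d) * a ≠ 0) (s : (ZMod d)ˣ) :
    ((((s : ZMod d) * (-((m : ZMod d) * a))).val : ℚ)
        + ∑ j ∈ Finset.range m,
            ((((s : ZMod d) * (a + ((j * (d / m) : ℕ) : ZMod d))).val : ℚ))) / (d : ℚ)
      = ((m : ℚ) + 1) / 2 := by
  have hd0 : d ≠ 0 := NeZero.ne d
  have hm0 : m ≠ 0 := by rintro rfl; simp at hma
  obtain ⟨n, hd⟩ := hm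
  have hn0 : n ≠ 0 := by rintro rfl; simp [hd] at hd0
  have hdm : d / m = n := by rw [hd, Nat.mul_div_cancel_left _ (Nat.pos_of_ne_zero hm0)]
  set c := ((s : ZMod d)).val with hc
  set v := (((s : ZMod d)) * a).val with hv
  have hvd : v < d := ZMod.val_lt _
  set q := v / n with hq
  set r := v % n with hr
  have hqr : n * q + r = v := Nat.div_add_mod v n
  have hrn : r < n := Nat.mod_lt _ (Nat.pos_of_ne_zero hn0)
  have hcop : Nat.Coprime c m :=
    Nat.Coprime.coprime_dvd_right ⟨n, hd⟩ (ZMod.val_coe_unit_coprime s)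
  have hsa : ((s : ZMod d)) * a = ((v : ℕ) : ZMod d) := (ZMod.natCast_rightInverse _).symm
  have hs : (s : ZMod d) = ((c : ℕ) : ZMod d) := (ZMod.natCast_rightInverse _).symm
  have hmvd : m * r < d := by
    rw [hd]; exact (Nat.mul_lt_mul_left (Nat.pos_of_ne_zero hm0)).mpr hrn
  have hval_msa : (((m * v : ℕ)) : ZMod d).val = m * r := by
    rw [ZMod.val_natCast]
    have h0 : m * v = m * r + d * q := by rw [← hqr, hd]; ring
    rw [h0, Nat.add_mul_mod_self_left]
    exact Nat.mod_eq_of_lt hmvd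
  have hne : (((m * v : ℕ)) : ZMod d) ≠ 0 := by
    have h0 : (((m * v : ℕ)) : ZMod d) = (s : ZMod d) * ((m : ZMod d) * a) := by
      push_cast
      rw [← hsa]; ring
    rw [h0]
    intro h
    exact hma ((Units.mul_right_eq_zero s).mp h)
  -- val of the negative term
  have hneg : ((s : ZMod d) * (-((m : ZMod d) * a))).val = d - m * r := by
    have h1 : (s : ZMod d) * (-((m : ZMod d) * a)) = -(((m * v : ℕ)) : ZMod d) := by
      push_cast
      rw [← hsa]; ring
    rw [h1, ZMod.neg_val, if_neg hne, hval_msa]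
  -- val of each sum term
  have hterm : ∀ j ∈ Finset.range m,
      (((((s : ZMod d) * (a + ((j * (d / m) : ℕ) : ZMod d))).val : ℕ)) : ℚ)
        = ((((q + c * j) % m) * n + r : ℕ) : ℚ) := by
    intro j hj
    congr 1
    have h1 : (s : ZMod d) * (a + ((j * (d / m) : ℕ) : ZMod d))
        = ((v + c * j * n : ℕ) : ZMod d) := by
      rw [hdm]
      push_cast
      rw [← hsa, ← hs]; ring
    rw [h1, ZMod.val_natCast, hd]
    have h2 : v + c * j * n = n * (q + c * j) + r := by rw [← hqr]; ring
    rw [h2, aux_mod m n (q + c * j) r hrn]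
    ring
  rw [Finset.sum_congr rfl hterm, hneg]
  have hsum : ∑ j ∈ Finset.range m, ((((q + c * j) % m) * n + r : ℕ) : ℚ)
      = (((∑ j ∈ Finset.range m, j) * n + m * r : ℕ) : ℚ) := by
    rw [← Nat.cast_sum]
    congr 1
    rw [Finset.sum_add_distrib, Finset.sum_const, Finset.card_range, ← Finset.sum_mul,
      aux_sum m q c hcop, smul_eq_mul]
  rw [hsum]
  set T := ∑ j ∈ Finset.range m, j with hT
  clear_value T
  have h2Tn : T * 2 = m * (m - 1) := by rw [hT]; exact Finset.sum_range_id_mul_two m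
  have h2T : (T : ℚ) * 2 = (m : ℚ) * ((m : ℚ) - 1) := by
    have h5 := congrArg (Nat.cast : ℕ → ℚ) h2Tn
    rw [Nat.cast_mul, Nat.cast_mul, Nat.cast_sub (Nat.one_le_iff_ne_zero.mpr hm0)] at h5
    push_cast at h5
    linarith
  have hdq : (d : ℚ) = (m : ℚ) * (n : ℚ) := by rw [hd]; push_cast; ring
  rw [Nat.cast_sub hmvd.le]
  push_cast
  have hdQ : (d : ℚ) ≠ 0 := Nat.cast_ne_zero.mpr hd0
  field_simp
  linear_combination (n : ℚ) * h2T + (1 - (m : ℚ)) * hdq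
end

section
/- Let q > 1 be a real number, w ∈ ℤ, and let V = ⊕_{i∈ℤ} V_i be a finite-dimensional graded complex vector space with an automorphism φ preserving each V_i such that all eigenvalues of φ on V_i have absolute value q^{(w+i)/2}. Let f : V → V be a linear map with f(V_i) ⊆ V_i for all i and f∘φ = q·φ∘f. Then f = 0. -/
/-!
From `f ∘ φ = q • (φ ∘ f)` one gets `f ∘ (φ - μ)^k = q^k • (φ - μ/q)^k ∘ f`, so `f` maps the
generalized `μ`-eigenspace of `φ` into the generalized `μ/q`-eigenspace. On the graded piece `V_i`
all eigenvalues of `φ` have the same nonzero absolute value, while `|μ/q| = |μ|/q ≠ |μ|`, so `μ` and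
`μ/q` are never both eigenvalues there: `f` kills every generalized eigenspace of `φ|V_i`, which
span `V_i`, and the `V_i` span `V`.
-/

namespace Module.End

variable {K V : Type*} [Field K] [AddCommGroup V] [Module K V]

theorem hasEigenvalue_of_mem_maxGenEigenspace {A : End K V} {μ : K} {x : V}
    (hx : x ∈ A.maxGenEigenspace μ) (hx0 : x ≠ 0) : A.HasEigenvalue μ :=
  (hasUnifEigenvalue_iff_hasUnifEigenvalue_one (by simp)).mp
    (HasUnifEigenvector.hasUnifEigenvalue ⟨hx, hx0⟩)

theorem mapsTo_maxGenEigenspace_of_comp_eq_smul_comp {A B : End K V} {c : K} (hc : c ≠ 0)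
    (hBA : B ∘ₗ A = c • (A ∘ₗ B)) (μ : K) :
    Set.MapsTo B (A.maxGenEigenspace μ) (A.maxGenEigenspace (μ / c)) := by
  have hsemi : SemiconjBy B (A - μ • 1) (c • (A - (μ / c) • 1)) := by
    simp only [SemiconjBy, mul_sub, sub_mul, smul_mul_assoc, mul_smul_comm, one_mul, mul_one,
      smul_sub, smul_smul, mul_div_cancel₀ _ hc]
    rw [mul_eq_comp, mul_eq_comp, hBA]
  intro x hx
  obtain ⟨k, hk⟩ := (A.mem_maxGenEigenspace μ x).mp hx
  refine (A.mem_maxGenEigenspace _ _).mpr ⟨k, ?_⟩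
  have := LinearMap.congr_fun (hsemi.pow_right k) x
  rw [smul_pow, mul_apply, mul_apply, hk, map_zero, LinearMap.smul_apply] at this
  exact (smul_eq_zero.mp this.symm).resolve_left (pow_ne_zero k hc)

theorem eq_zero_of_comp_eq_smul_comp [IsAlgClosed K] [FiniteDimensional K V] {A B : End K V}
    {c : K} (hc : c ≠ 0) (hBA : B ∘ₗ A = c • (A ∘ₗ B))
    (hspec : ∀ μ, A.HasEigenvalue μ → ¬ A.HasEigenvalue (μ / c)) : B = 0 := by
  rw [← LinearMap.ker_eq_top, eq_top_iff, ← A.iSup_maxGenEigenspace_eq_top]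
  refine iSup_le fun μ x hx => LinearMap.mem_ker.mpr ?_
  by_contra hBx
  have hx0 : x ≠ 0 := by rintro rfl; exact hBx (map_zero B)
  exact hspec μ (hasEigenvalue_of_mem_maxGenEigenspace hx hx0)
    (hasEigenvalue_of_mem_maxGenEigenspace
      (mapsTo_maxGenEigenspace_of_comp_eq_smul_comp hc hBA μ hx) hBx)

theorem eq_zero_of_comp_eq_smul_comp_of_norm_eigenvalue {K V : Type*} [NormedField K]
    [IsAlgClosed K] [AddCommGroup V] [Module K V] [FiniteDimensional K V] {A B : End K V}
    {c : K} (hc0 : c ≠ 0) (hc : ‖c‖ ≠ 1) (hBA : B ∘ₗ A = c • (A ∘ₗ B)) {r : ℝ} (hr : r ≠ 0)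
    (heig : ∀ μ, A.HasEigenvalue μ → ‖μ‖ = r) : B = 0 := by
  refine eq_zero_of_comp_eq_smul_comp hc0 hBA fun μ hμ hμc => hc ?_
  have h := heig _ hμc
  rw [norm_div, heig μ hμ, div_eq_iff (norm_ne_zero_iff.mpr hc0)] at h
  exact (mul_eq_left₀ hr).mp h.symm

end Module.End

/-- Linear-algebra core of "pure implies generic": on a graded finite-dimensional
complex vector space with an automorphism `φ` whose eigenvalues on the `i`-th piece
all have absolute value `q^{(w+i)/2}`, any grading-preserving `f` with
`f ∘ φ = q · φ ∘ f` vanishes. -/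
theorem graded_purity_forces_zero
    {V : Type*} [AddCommGroup V] [Module ℂ V] [FiniteDimensional ℂ V]
    (Vsub : ℤ → Submodule ℂ V) (hV : DirectSum.IsInternal Vsub)
    (φ : V ≃ₗ[ℂ] V) (hφ : ∀ i, ∀ x ∈ Vsub i, φ x ∈ Vsub i)
    (q : ℝ) (hq : 1 < q) (w : ℤ)
    (hpure : ∀ (i : ℤ) (μ : ℂ) (x : V), x ∈ Vsub i → x ≠ 0 → φ x = μ • x →
      ‖μ‖ = q ^ (((w : ℝ) + (i : ℝ)) / 2))
    (f : V →ₗ[ℂ] V) (hf : ∀ i, ∀ x ∈ Vsub i, f x ∈ Vsub i)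
    (hcomm : f ∘ₗ (φ : V →ₗ[ℂ] V) = (q : ℂ) • ((φ : V →ₗ[ℂ] V) ∘ₗ f)) :
    f = 0 := by
  have hq0 : 0 < q := zero_lt_one.trans hq
  have hqC : (q : ℂ) ≠ 0 := by exact_mod_cast hq0.ne'
  have hqC_norm : ‖(q : ℂ)‖ ≠ 1 := by rw [Complex.norm_of_nonneg hq0.le]; exact hq.ne'
  have hpiece : ∀ i, f.restrict (hf i) = 0 := fun i =>
    Module.End.eq_zero_of_comp_eq_smul_comp_of_norm_eigenvalue
      (A := (φ : V →ₗ[ℂ] V).restrict (hφ i)) hqC hqC_norm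
      (LinearMap.ext fun x => Subtype.ext (LinearMap.congr_fun hcomm x))
      (Real.rpow_pos_of_pos hq0 (((w : ℝ) + (i : ℝ)) / 2)).ne' fun μ hμ => by
        obtain ⟨y, hy⟩ := hμ.exists_hasEigenvector
        exact hpure i μ y y.2 (Subtype.coe_ne_coe.mpr hy.2)
          (congrArg Subtype.val hy.apply_eq_smul)
  rw [← LinearMap.ker_eq_top, eq_top_iff, ← hV.submodule_iSup_eq_top]
  exact iSup_le fun i x hx => congrArg Subtype.val (LinearMap.congr_fun (hpiece i) ⟨x, hx⟩)
end
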